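/- arXiv:2504.14632 — 5 statements merged into one kernel-verified Lean document; each statement's English description precedes it below -/
import Mathlib

section
/- Suppose real numbers a, b, K₁, K₂, K₃, K₄, p₁, p₂, h, θ satisfy the full system a·cos θ − K₁ − K₄·p₁ = 0, a·sin θ + K₄·p₂ = −h, b·cos θ − K₂ − K₃·p₁ = 0, b·sin θ − K₃·p₂ = −h, together with the normalization p₁² + p₂² = 1, and assume a·K₃ ≠ b·K₄. Then p₂²·(a·K₃ − b·K₄)² = (a·K₃ − b·K₄)² − (b·K₁ − a·K₂)²; in particular (b·K₁ − a·K₂)² ≤ (a·K₃ − b·K₄)². -/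
theorem cramer_snd_mul_det {R : Type*} [CommRing R] {a b c p K₁ K₂ K₃ K₄ : R}
    (h₁ : a * c - K₁ - K₄ * p = 0) (h₂ : b * c - K₂ - K₃ * p = 0) :
    p * (a * K₃ - b * K₄) = b * K₁ - a * K₂ := by
  linear_combination b * h₁ - a * h₂

theorem sq_mul_sq_eq_sq_sub_sq_of_mul_eq {R : Type*} [CommRing R] {p q D N : R}
    (hpD : p * D = N) (hpq : p ^ 2 + q ^ 2 = 1) :
    q ^ 2 * D ^ 2 = D ^ 2 - N ^ 2 := by
  linear_combination D ^ 2 * hpq - (p * D + N) * hpD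

theorem stmt_3_general (a b K₁ K₂ K₃ K₄ p₁ p₂ θ : ℝ)
    (h1 : a * Real.cos θ - K₁ - K₄ * p₁ = 0)
    (h3 : b * Real.cos θ - K₂ - K₃ * p₁ = 0)
    (hnorm : p₁ ^ 2 + p₂ ^ 2 = 1) :
    p₂ ^ 2 * (a * K₃ - b * K₄) ^ 2 = (a * K₃ - b * K₄) ^ 2 - (b * K₁ - a * K₂) ^ 2 ∧
    (b * K₁ - a * K₂) ^ 2 ≤ (a * K₃ - b * K₄) ^ 2 := by
  have hp₂ := sq_mul_sq_eq_sq_sub_sq_of_mul_eq (cramer_snd_mul_det h1 h3) hnorm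
  exact ⟨hp₂, sub_nonneg.mp (hp₂ ▸ by positivity)⟩

theorem stmt_3 (a b K₁ K₂ K₃ K₄ p₁ p₂ h θ : ℝ)
    (h1 : a * Real.cos θ - K₁ - K₄ * p₁ = 0)
    (h2 : a * Real.sin θ + K₄ * p₂ = -h)
    (h3 : b * Real.cos θ - K₂ - K₃ * p₁ = 0)
    (h4 : b * Real.sin θ - K₃ * p₂ = -h)
    (hnorm : p₁ ^ 2 + p₂ ^ 2 = 1)
    (hne : a * K₃ ≠ b * K₄) :
    p₂ ^ 2 * (a * K₃ - b * K₄) ^ 2 = (a * K₃ - b * K₄) ^ 2 - (b * K₁ - a * K₂) ^ 2 ∧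
    (b * K₁ - a * K₂) ^ 2 ≤ (a * K₃ - b * K₄) ^ 2 :=
  stmt_3_general a b K₁ K₂ K₃ K₄ p₁ p₂ θ h1 h3 hnorm
end

section
/- Let a, b, K₁, K₂, K₃, K₄ be real numbers with a·K₃ ≠ b·K₄ and a ≠ b. Suppose (p₁, p₂, h, θ) and (p₁', p₂', h', θ') both solve the system a·cos θ − K₁ − K₄·p₁ = 0, a·sin θ + K₄·p₂ = −h, b·cos θ − K₂ − K₃·p₁ = 0, b·sin θ − K₃·p₂ = −h (with corresponding primed variables), both satisfy p₁² + p₂² = 1 and p₁'² + p₂'² = 1, both have p₂ < 0 and p₂' < 0, and both have θ, θ' ∈ (0, π). Then p₁ = p₁', p₂ = p₂', h = h' and θ = θ'. -/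
/-! Subtracting the equations for the two solutions leaves homogeneous linear systems.
In `(cos θ, p₁)` the determinant is `a K₃ - b K₄ ≠ 0`, and `cos` is injective on `(0, π)`,
so `θ` and `p₁` agree. With `θ` fixed, the system in `(p₂, h)` has determinant `K₃ + K₄`,
which cannot vanish: otherwise the two sine equations would give `(a - b) sin θ = 0`. -/

lemma eq_and_eq_of_cos_system {a b K₁ K₂ K₃ K₄ x p x' p' : ℝ} (hne : a * K₃ ≠ b * K₄)
    (e1 : a * x - K₁ - K₄ * p = 0) (e3 : b * x - K₂ - K₃ * p = 0)
    (e1' : a * x' - K₁ - K₄ * p' = 0) (e3' : b * x' - K₂ - K₃ * p' = 0) :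
    x = x' ∧ p = p' := by
  have hdet : a * K₃ - b * K₄ ≠ 0 := sub_ne_zero.mpr hne
  constructor
  · exact mul_left_cancel₀ hdet (by linear_combination K₃ * (e1 - e1') - K₄ * (e3 - e3'))
  · exact mul_left_cancel₀ hdet (by linear_combination b * (e1 - e1') - a * (e3 - e3'))

lemma eq_and_eq_of_sin_system {a b K₃ K₄ y p h p' h' : ℝ} (hab : a ≠ b) (hy : y ≠ 0)
    (e2 : a * y + K₄ * p = -h) (e4 : b * y - K₃ * p = -h)
    (e2' : a * y + K₄ * p' = -h') (e4' : b * y - K₃ * p' = -h') :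
    p = p' ∧ h = h' := by
  have hdet : K₃ + K₄ ≠ 0 := by
    intro h0
    have : (a - b) * y = 0 := by linear_combination e2 - e4 - p * h0
    exact mul_ne_zero (sub_ne_zero.mpr hab) hy this
  have hp : p = p' := mul_left_cancel₀ hdet (by linear_combination e2 - e4 - e2' + e4')
  exact ⟨hp, by linear_combination e2 - e2' - K₄ * hp⟩

theorem stmt_4_general (a b K₁ K₂ K₃ K₄ : ℝ)
    (hne : a * K₃ ≠ b * K₄) (hab : a ≠ b)
    (p₁ p₂ h θ p₁' p₂' h' θ' : ℝ)
    (e1 : a * Real.cos θ - K₁ - K₄ * p₁ = 0)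
    (e2 : a * Real.sin θ + K₄ * p₂ = -h)
    (e3 : b * Real.cos θ - K₂ - K₃ * p₁ = 0)
    (e4 : b * Real.sin θ - K₃ * p₂ = -h)
    (e1' : a * Real.cos θ' - K₁ - K₄ * p₁' = 0)
    (e2' : a * Real.sin θ' + K₄ * p₂' = -h')
    (e3' : b * Real.cos θ' - K₂ - K₃ * p₁' = 0)
    (e4' : b * Real.sin θ' - K₃ * p₂' = -h')
    (hθ : θ ∈ Set.Ioo 0 Real.pi) (hθ' : θ' ∈ Set.Ioo 0 Real.pi) :
    p₁ = p₁' ∧ p₂ = p₂' ∧ h = h' ∧ θ = θ' := by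
  obtain ⟨hcos, hp₁⟩ := eq_and_eq_of_cos_system hne e1 e3 e1' e3'
  have hθeq : θ = θ' := Real.injOn_cos (Set.Ioo_subset_Icc_self hθ)
    (Set.Ioo_subset_Icc_self hθ') hcos
  subst hθeq
  have hsin : Real.sin θ ≠ 0 := (Real.sin_pos_of_pos_of_lt_pi hθ.1 hθ.2).ne'
  obtain ⟨hp₂, hh⟩ := eq_and_eq_of_sin_system hab hsin e2 e4 e2' e4'
  exact ⟨hp₁, hp₂, hh, rfl⟩

theorem stmt_4 (a b K₁ K₂ K₃ K₄ : ℝ)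
    (hne : a * K₃ ≠ b * K₄) (hab : a ≠ b)
    (p₁ p₂ h θ p₁' p₂' h' θ' : ℝ)
    (e1 : a * Real.cos θ - K₁ - K₄ * p₁ = 0)
    (e2 : a * Real.sin θ + K₄ * p₂ = -h)
    (e3 : b * Real.cos θ - K₂ - K₃ * p₁ = 0)
    (e4 : b * Real.sin θ - K₃ * p₂ = -h)
    (e1' : a * Real.cos θ' - K₁ - K₄ * p₁' = 0)
    (e2' : a * Real.sin θ' + K₄ * p₂' = -h')
    (e3' : b * Real.cos θ' - K₂ - K₃ * p₁' = 0)
    (e4' : b * Real.sin θ' - K₃ * p₂' = -h')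
    (hn : p₁ ^ 2 + p₂ ^ 2 = 1) (hn' : p₁' ^ 2 + p₂' ^ 2 = 1)
    (hp2 : p₂ < 0) (hp2' : p₂' < 0)
    (hθ : θ ∈ Set.Ioo 0 Real.pi) (hθ' : θ' ∈ Set.Ioo 0 Real.pi) :
    p₁ = p₁' ∧ p₂ = p₂' ∧ h = h' ∧ θ = θ' :=
  stmt_4_general a b K₁ K₂ K₃ K₄ hne hab p₁ p₂ h θ p₁' p₂' h' θ' e1 e2 e3 e4 e1' e2' e3' e4' hθ hθ'
end

section
/- Let a, b, K₁, K₂, K₃, K₄ be real numbers with a·K₃ ≠ b·K₄ and a ≠ b. Suppose (p₁, p₂, h, θ) solves the system a·cos θ − K₁ − K₄·p₁ = 0, a·sin θ + K₄·p₂ = −h, b·cos θ − K₂ − K₃·p₁ = 0, b·sin θ − K₃·p₂ = −h, with p₁² + p₂² = 1 and p₂ < 0. Then p₁ = (b·K₁ − a·K₂)/(a·K₃ − b·K₄), p₂ = −√((a·K₃ − b·K₄)² − (b·K₁ − a·K₂)²)/|a·K₃ − b·K₄|, h = (a·K₃ + b·K₄)·p₂/(a − b), and cos θ = (K₁·K₃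 − K₂·K₄)/(a·K₃ − b·K₄). -/
theorem stmt_5 (a b K₁ K₂ K₃ K₄ p₁ p₂ h θ : ℝ)
    (hne : a * K₃ ≠ b * K₄) (hab : a ≠ b)
    (e1 : a * Real.cos θ - K₁ - K₄ * p₁ = 0)
    (e2 : a * Real.sin θ + K₄ * p₂ = -h)
    (e3 : b * Real.cos θ - K₂ - K₃ * p₁ = 0)
    (e4 : b * Real.sin θ - K₃ * p₂ = -h)
    (hn : p₁ ^ 2 + p₂ ^ 2 = 1) (hp2 : p₂ < 0) :
    p₁ = (b * K₁ - a * K₂) / (a * K₃ - b * K₄) ∧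
    p₂ = -Real.sqrt ((a * K₃ - b * K₄) ^ 2 - (b * K₁ - a * K₂) ^ 2) / |a * K₃ - b * K₄| ∧
    h = (a * K₃ + b * K₄) * p₂ / (a - b) ∧
    Real.cos θ = (K₁ * K₃ - K₂ * K₄) / (a * K₃ - b * K₄) := by
  have hD : a * K₃ - b * K₄ ≠ 0 := sub_ne_zero.mpr hne
  have hab' : a - b ≠ 0 := sub_ne_zero.mpr hab
  have hp1 : p₁ = (b * K₁ - a * K₂) / (a * K₃ - b * K₄) := by
    field_simp
    linear_combination b * e1 - a * e3
  have key : (a * K₃ - b * K₄) ^ 2 - (b * K₁ - a * K₂) ^ 2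
      = (p₂ * (a * K₃ - b * K₄)) ^ 2 := by
    have hN : b * K₁ - a * K₂ = p₁ * (a * K₃ - b * K₄) := by
      field_simp at hp1; linarith [hp1]
    rw [hN]
    nlinarith [hn]
  refine ⟨hp1, ?_, ?_, ?_⟩
  · rw [key, Real.sqrt_sq_eq_abs, abs_mul, abs_of_neg hp2]
    field_simp
  · field_simp
    linear_combination a * e4 - b * e2
  · rw [eq_div_iff hD]
    linear_combination K₃ * e1 - K₄ * e3
end

section
/- Let a, b, K₁, K₂, K₃, K₄ be real numbers with a·K₃ ≠ b·K₄, (b·K₁ − a·K₂)² ≤ (a·K₃ − b·K₄)², and |K₁·K₃ − K₂·K₄| ≤ |a·K₃ − b·K₄|. Define p₁ = (b·K₁ − a·K₂)/(a·K₃ − b·K₄), p₂ = −√((a·K₃ − b·K₄)² − (b·K₁ − a·K₂)²)/|a·K₃ − b·K₄|, and θ = arccos((K₁·K₃ − K₂·K₄)/(a·K₃ − b·K₄)). Then p₁² + p₂² = 1, a·cos θ − K₁ − K₄·p₁ = 0, and b·cos θ − K₂ − K₃·p₁ = 0. -/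
theorem stmt_6 (a b K₁ K₂ K₃ K₄ : ℝ)
    (hne : a * K₃ ≠ b * K₄)
    (h1 : (b * K₁ - a * K₂) ^ 2 ≤ (a * K₃ - b * K₄) ^ 2)
    (h2 : |K₁ * K₃ - K₂ * K₄| ≤ |a * K₃ - b * K₄|)
    (p₁ p₂ θ : ℝ)
    (hp₁ : p₁ = (b * K₁ - a * K₂) / (a * K₃ - b * K₄))
    (hp₂ : p₂ = -Real.sqrt ((a * K₃ - b * K₄) ^ 2 - (b * K₁ - a * K₂) ^ 2) / |a * K₃ - b * K₄|)
    (hθ : θ = Real.arccos ((K₁ * K₃ - K₂ * K₄) / (a * K₃ - b * K₄))) :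
    p₁ ^ 2 + p₂ ^ 2 = 1 ∧
    a * Real.cos θ - K₁ - K₄ * p₁ = 0 ∧
    b * Real.cos θ - K₂ - K₃ * p₁ = 0 := by
  have hD : a * K₃ - b * K₄ ≠ 0 := sub_ne_zero.2 hne
  have hD2 : (a * K₃ - b * K₄) ^ 2 ≠ 0 := pow_ne_zero _ hD
  have habs : |a * K₃ - b * K₄| ≠ 0 := abs_ne_zero.2 hD
  have hb : |(K₁ * K₃ - K₂ * K₄) / (a * K₃ - b * K₄)| ≤ 1 := by
    rw [abs_div, div_le_one (abs_pos.2 hD)]; exact h2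
  have hcos : Real.cos θ = (K₁ * K₃ - K₂ * K₄) / (a * K₃ - b * K₄) := by
    rw [hθ, Real.cos_arccos (abs_le.1 hb).1 (abs_le.1 hb).2]
  constructor
  · have hnn : 0 ≤ (a * K₃ - b * K₄) ^ 2 - (b * K₁ - a * K₂) ^ 2 := by linarith
    have hsq : (Real.sqrt ((a * K₃ - b * K₄) ^ 2 - (b * K₁ - a * K₂) ^ 2)) ^ 2
        = (a * K₃ - b * K₄) ^ 2 - (b * K₁ - a * K₂) ^ 2 := Real.sq_sqrt hnn
    rw [hp₁, hp₂]
    rw [div_pow, div_pow, neg_pow, hsq, sq_abs]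
    field_simp
    ring
  constructor
  · rw [hcos, hp₁]
    field_simp
    have hD' : a * K₃ - K₄ * b ≠ 0 := by rwa [mul_comm K₄ b]
    field_simp
    ring
  · rw [hcos, hp₁]
    field_simp
    have hD' : K₃ * a - b * K₄ ≠ 0 := by rwa [mul_comm K₃ a]
    field_simp
    ring
end

section
/- Let a, b, K₁, K₂, K₃, K₄ be real numbers with a·K₃ ≠ b·K₄, and suppose (p₁, p₂, h, θ) solves the system a·cos θ − K₁ − K₄·p₁ = 0, a·sin θ + K₄·p₂ = −h, b·cos θ − K₂ − K₃·p₁ = 0, b·sin θ − K₃·p₂ = −h, with h > 0 and θ > 0. Assume moreover p₁·p₂ > 0, (K₄ − K₃)·p₂ > 0, and b·(K₁·K₃ − K₂·K₄)/(a·K₃ − b·K₄) > 0. Then for every natural number n, the quantity Im(Sₙ(0)) := 2·p₁·p₂ + ((θ + 2nπ)/h)·(2·p₁·p₂·b·cos θ − (a + b)·sin θ) satisfies Im(Sₙ(0)) = 2·p₁·p₂ + 2·(θ + 2nπ) + ((θ + 2nπ)/h)·((K₄ − K₃)·p₂ + 2·p₁·p₂·b·(K₁·K₃ − K₂·K₄)/(a·K₃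 − b·K₄)) and is strictly positive. -/
theorem stmt_11 (a b K₁ K₂ K₃ K₄ p₁ p₂ h θ : ℝ)
    (hne : a * K₃ ≠ b * K₄)
    (e1 : a * Real.cos θ - K₁ - K₄ * p₁ = 0)
    (e2 : a * Real.sin θ + K₄ * p₂ = -h)
    (e3 : b * Real.cos θ - K₂ - K₃ * p₁ = 0)
    (e4 : b * Real.sin θ - K₃ * p₂ = -h)
    (hh : h > 0) (hθ : θ > 0)
    (hpp : p₁ * p₂ > 0)
    (hKp : (K₄ - K₃) * p₂ > 0)
    (hbd : b * (K₁ * K₃ - K₂ * K₄) / (a * K₃ - b * K₄) > 0) :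
    ∀ n : ℕ,
      2 * p₁ * p₂ + ((θ + 2 * n * Real.pi) / h) *
          (2 * p₁ * p₂ * b * Real.cos θ - (a + b) * Real.sin θ) =
        2 * p₁ * p₂ + 2 * (θ + 2 * n * Real.pi) +
          ((θ + 2 * n * Real.pi) / h) *
            ((K₄ - K₃) * p₂ + 2 * p₁ * p₂ * b * (K₁ * K₃ - K₂ * K₄) / (a * K₃ - b * K₄)) ∧
      0 < 2 * p₁ * p₂ + ((θ + 2 * n * Real.pi) / h) *
          (2 * p₁ * p₂ * b * Real.cos θ - (a + b) * Real.sin θ) := by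
  intro n
  have hD : a * K₃ - b * K₄ ≠ 0 := sub_ne_zero.mpr hne
  have hcos : Real.cos θ = (K₁ * K₃ - K₂ * K₄) / (a * K₃ - b * K₄) := by
    rw [eq_div_iff hD]
    linear_combination K₃ * e1 - K₄ * e3
  have hsin : -((a + b) * Real.sin θ) = 2 * h + (K₄ - K₃) * p₂ := by linarith
  have key : 2 * p₁ * p₂ * b * Real.cos θ - (a + b) * Real.sin θ
      = 2 * h + (K₄ - K₃) * p₂
        + 2 * p₁ * p₂ * b * (K₁ * K₃ - K₂ * K₄) / (a * K₃ - b * K₄) := by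
    rw [hcos]
    linear_combination hsin
  have hT : (0:ℝ) < θ + 2 * n * Real.pi := by
    have := Real.pi_pos
    positivity
  have heq : 2 * p₁ * p₂ + ((θ + 2 * n * Real.pi) / h) *
          (2 * p₁ * p₂ * b * Real.cos θ - (a + b) * Real.sin θ) =
        2 * p₁ * p₂ + 2 * (θ + 2 * n * Real.pi) +
          ((θ + 2 * n * Real.pi) / h) *
            ((K₄ - K₃) * p₂ + 2 * p₁ * p₂ * b * (K₁ * K₃ - K₂ * K₄) / (a * K₃ - b * K₄)) := by
    rw [key]
    field_simp
    ring
  refine ⟨heq, ?_⟩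
  rw [heq]
  have h1 : 0 < 2 * p₁ * p₂ * b * (K₁ * K₃ - K₂ * K₄) / (a * K₃ - b * K₄) := by
    have : 2 * p₁ * p₂ * b * (K₁ * K₃ - K₂ * K₄) / (a * K₃ - b * K₄)
        = 2 * (p₁ * p₂) * (b * (K₁ * K₃ - K₂ * K₄) / (a * K₃ - b * K₄)) := by ring
    rw [this]; positivity
  have h2 : 0 < (θ + 2 * n * Real.pi) / h := div_pos hT hh
  nlinarith [mul_pos h2 (add_pos hKp h1)]
end
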